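/- For every group G and every natural number n, the normalizer of the iterated wreath product W(G,n) in the symmetric group Perm(Gⁿ) is an internal semidirect product M_n ⋉ W(G,n): that is, there exists a subgroup M_n of Perm(Gⁿ) with M_n ∩ W(G,n) = 1, such that the normalizer equals M_n · W(G,n) and W(G,n) is normal in this normalizer; moreover M_n is isomorphic to the direct product Aut(G)ⁿ of n copies of the automorphism group of G. -/

import Mathlib

open Equiv

/-- The block `X_y = X × {y}` inside `Z = X × Y`. -/
def block (X Y : Type*) (y : Y) : Set (X × Y) := {p | p.2 = y}

/-- The subgroup `S_Y(Z)` of all permutations of `Z = X × Y` stabilizing every block `X_y`. -/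
def blockStab (X Y : Type*) : Subgroup (Perm (X × Y)) where
  carrier := {f | ∀ y : Y, f '' block X Y y = block X Y y}
  one_mem' := by intro y; simp
  mul_mem' := by
    intro f g hf hg y
    have hfg : ⇑(f * g) = ⇑f ∘ ⇑g := rfl
    rw [hfg, Set.image_comp, hg y, hf y]
  inv_mem' := by
    intro f hf y
    have h1 : ⇑f '' block X Y y = block X Y y := hf y
    calc ⇑f⁻¹ '' block X Y y = ⇑f⁻¹ '' (⇑f '' block X Y y) := by rw [h1]
      _ = block X Y y := by
          rw [← Set.image_comp]
          have h2 : ⇑f⁻¹ ∘ ⇑f = id := by funext p; simp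
          rw [h2, Set.image_id]

/-- For `h` a permutation of `X` and `y ∈ Y`, the permutation `h_y` of `Z = X × Y`
acting as `h` on the block `X_y` and fixing everything else. -/
noncomputable def fiberPerm (X Y : Type*) (h : Perm X) (y : Y) : Perm (X × Y) :=
  letI := Classical.decEq Y
  { toFun := fun p => if p.2 = y then (h p.1, p.2) else p
    invFun := fun p => if p.2 = y then (h.symm p.1, p.2) else p
    left_inv := fun p => by
      obtain ⟨x, y'⟩ := p
      by_cases hp : y' = y <;> simp [hp]
    right_inv := fun p => by
      obtain ⟨x, y'⟩ := p
      by_cases hp : y' = y <;> simp [hp] }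

lemma fiberPerm_apply_eq (X Y : Type*) (h : Perm X) (y : Y) (x : X) :
    fiberPerm X Y h y (x, y) = (h x, y) := by
  simp [fiberPerm]

lemma fiberPerm_apply_ne (X Y : Type*) (h : Perm X) (y : Y) (p : X × Y) (hp : p.2 ≠ y) :
    fiberPerm X Y h y p = p := by
  simp [fiberPerm, hp]

/-- The homomorphism `h ↦ h_y`. -/
noncomputable def fiberHom (X Y : Type*) (y : Y) : Perm X →* Perm (X × Y) where
  toFun h := fiberPerm X Y h y
  map_one' := by
    refine Equiv.ext fun p => ?_
    by_cases hp : p.2 = y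
    · obtain ⟨x, y'⟩ := p; subst hp; simp [fiberPerm_apply_eq]
    · simp [fiberPerm_apply_ne _ _ _ _ _ hp]
  map_mul' := by
    intro h1 h2
    refine Equiv.ext fun p => ?_
    by_cases hp : p.2 = y
    · obtain ⟨x, y'⟩ := p
      subst hp
      simp [Perm.mul_apply, fiberPerm_apply_eq]
    · simp [Perm.mul_apply, fiberPerm_apply_ne _ _ _ _ _ hp]

/-- The embedding `Λ` of permutations of `Y` into permutations of `Z = X × Y`,
`Λ(k)(x,y) = (x, k(y))`. -/
def lamHom (X Y : Type*) : Perm Y →* Perm (X × Y) where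
  toFun k := (Equiv.refl X).prodCongr k
  map_one' := Equiv.ext fun p => rfl
  map_mul' := fun k1 k2 => Equiv.ext fun p => rfl

lemma lamHom_apply (X Y : Type*) (k : Perm Y) (x : X) (y : Y) :
    lamHom X Y k (x, y) = (x, k y) := rfl

/-- The base group `B` of the wreath product: all permutations of `Z = X × Y`
stabilizing each block `X_y` and restricting to an element of `H_y` on it. -/
def baseGroup (X Y : Type*) (H : Subgroup (Perm X)) : Subgroup (Perm (X × Y)) where
  carrier := {f | ∀ y : Y, ∃ h ∈ H, ∀ x : X, f (x, y) = (h x, y)}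
  one_mem' := fun y => ⟨1, H.one_mem, fun x => rfl⟩
  mul_mem' := by
    rintro f g hf hg y
    obtain ⟨hg', hgH, hgeq⟩ := hg y
    obtain ⟨hf', hfH, hfeq⟩ := hf y
    refine ⟨hf' * hg', H.mul_mem hfH hgH, fun x => ?_⟩
    have : (f * g) (x, y) = f (g (x, y)) := rfl
    rw [this, hgeq x, hfeq (hg' x)]
    rfl
  inv_mem' := by
    rintro f hf y
    obtain ⟨h, hH, heq⟩ := hf y
    refine ⟨h⁻¹, H.inv_mem hH, fun x => ?_⟩
    have h1 : f ((h⁻¹ : Perm X) x, y) = (x, y) := by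
      rw [heq]
      simp
    calc f⁻¹ (x, y) = f⁻¹ (f ((h⁻¹ : Perm X) x, y)) := by rw [h1]
      _ = ((h⁻¹ : Perm X) x, y) := by simp

lemma mem_baseGroup_iff (X Y : Type*) (H : Subgroup (Perm X)) (f : Perm (X × Y)) :
    f ∈ baseGroup X Y H ↔ ∀ y : Y, ∃ h ∈ H, ∀ x : X, f (x, y) = (h x, y) := Iff.rfl

lemma lam_conj_base (X Y : Type*) {H : Subgroup (Perm X)} (k : Perm Y) {b : Perm (X × Y)}
    (hb : b ∈ baseGroup X Y H) : (lamHom X Y k)⁻¹ * b * lamHom X Y k ∈ baseGroup X Y H := by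
  intro y
  obtain ⟨h, hH, heq⟩ := hb (k y)
  refine ⟨h, hH, fun x => ?_⟩
  have h2 : ((lamHom X Y k)⁻¹ : Perm (X × Y)) (h x, k y) = (h x, y) := by
    have h3 : (lamHom X Y k) (h x, y) = (h x, k y) := rfl
    rw [← h3]
    simp
  calc ((lamHom X Y k)⁻¹ * b * lamHom X Y k) (x, y)
      = (lamHom X Y k)⁻¹ (b ((lamHom X Y k) (x, y))) := rfl
    _ = (lamHom X Y k)⁻¹ (b (x, k y)) := rfl
    _ = (lamHom X Y k)⁻¹ (h x, k y) := by rw [heq x]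
    _ = (h x, y) := h2

/-- The unrestricted wreath product `W = H ≀ K ≤ Perm(X × Y)`, namely the
internal product `Λ(K)·B`. -/
def wreath (X Y : Type*) (H : Subgroup (Perm X)) (K : Subgroup (Perm Y)) :
    Subgroup (Perm (X × Y)) where
  carrier := {w | ∃ k ∈ K, ∃ b ∈ baseGroup X Y H, w = lamHom X Y k * b}
  one_mem' := ⟨1, K.one_mem, 1, (baseGroup X Y H).one_mem, by simp⟩
  mul_mem' := by
    rintro w1 w2 ⟨k1, hk1, b1, hb1, rfl⟩ ⟨k2, hk2, b2, hb2, rfl⟩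
    refine ⟨k1 * k2, K.mul_mem hk1 hk2, ((lamHom X Y k2)⁻¹ * b1 * lamHom X Y k2) * b2,
      (baseGroup X Y H).mul_mem (lam_conj_base X Y k2 hb1) hb2, ?_⟩
    rw [map_mul]
    group
  inv_mem' := by
    rintro w ⟨k, hk, b, hb, rfl⟩
    refine ⟨k⁻¹, K.inv_mem hk, (lamHom X Y k⁻¹)⁻¹ * b⁻¹ * lamHom X Y k⁻¹,
      lam_conj_base X Y k⁻¹ ((baseGroup X Y H).inv_mem hb), ?_⟩
    rw [map_inv]
    group

lemma mem_wreath_iff (X Y : Type*) (H : Subgroup (Perm X)) (K : Subgroup (Perm Y))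
    (w : Perm (X × Y)) :
    w ∈ wreath X Y H K ↔ ∃ k ∈ K, ∃ b ∈ baseGroup X Y H, w = lamHom X Y k * b := Iff.rfl

/-- The image of the (right) regular representation of a group `K` in `Perm K`. -/
def rightRegular (K : Type*) [Group K] : Subgroup (Perm K) where
  carrier := Set.range (fun k : K => Equiv.mulRight k)
  one_mem' := ⟨1, by ext x; simp⟩
  mul_mem' := by
    rintro _ _ ⟨a, rfl⟩ ⟨b, rfl⟩
    exact ⟨b * a, by ext x; simp [mul_assoc]⟩
  inv_mem' := by
    rintro _ ⟨a, rfl⟩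
    exact ⟨a⁻¹, by ext x; simp⟩

/-- The homomorphism `Γ : Aut(K) → Perm(X × K)`, `Γ(γ)(x,k) = (x, γ(k))`. -/
def gammaHom (X K : Type*) [Group K] : MulAut K →* Perm (X × K) where
  toFun γ := (Equiv.refl X).prodCongr γ.toEquiv
  map_one' := Equiv.ext fun p => rfl
  map_mul' := fun γ1 γ2 => Equiv.ext fun p => rfl

lemma gammaHom_apply (X K : Type*) [Group K] (γ : MulAut K) (x : X) (k : K) :
    gammaHom X K γ (x, k) = (x, γ k) := rfl

/-- The homomorphism `m ↦ m*` from `Perm X` to `Perm (X × K)`, `m*(x,k) = (m(x), k)`. -/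
def mstarHom (X K : Type*) : Perm X →* Perm (X × K) where
  toFun m := m.prodCongr (Equiv.refl K)
  map_one' := Equiv.ext fun p => rfl
  map_mul' := fun m1 m2 => Equiv.ext fun p => rfl

lemma mstarHom_apply (X K : Type*) (m : Perm X) (x : X) (k : K) :
    mstarHom X K m (x, k) = (m x, k) := rfl
/-- The underlying set `G^n` of the iterated wreath product. -/
def iterSpace (G : Type u) : ℕ → Type u
  | 0 => PUnit
  | n + 1 => iterSpace G n × G

/-- The iterated wreath product `W(G,n) ≤ Perm(G^n)`: `W(G,0)` is trivial and
`W(G,n+1) = W(G,n) ≀ G`, with `G` acting on itself by the regular representation. -/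
def iterW (G : Type u) [Group G] : (n : ℕ) → Subgroup (Perm (iterSpace G n))
  | 0 => ⊥
  | n + 1 => wreath (iterSpace G n) G (iterW G n) (rightRegular G)

/-!
Induction on `n`: write `W = H ≀ G` with `H = W(G,n)` transitive, `N(H) = M · H` and
`M ∩ H = 1`. Since `G ≠ 1` acts regularly, point stabilizers of `W` lie in the base group, and
every base element is a product of two point stabilizers (there are at least two blocks); so
`N(W)` normalizes the base group and, `H` being transitive, every `α ∈ N(W)` permutes the
blocks: `α (x, y) = (F y x, σ y)`. Conjugating the translations `(x, y) ↦ (x, y * g)` by `α`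
shows that `σ` normalizes the regular representation, so `σ = γ · a` with `γ ∈ Aut G`, and that
all `F y` lie in the coset `H · F 1` with `F 1 ∈ N(H) = M · H`. Hence `N(W) = M' · W` for
`M' = {(x, y) ↦ (m x, γ y) | m ∈ M, γ ∈ Aut G} ≅ M × Aut G`.
-/

namespace Subgroup

lemma mem_normalizer_of_conj_mem {Γ : Type*} [Group Γ] {H : Subgroup Γ} {g : Γ}
    (h₁ : ∀ h ∈ H, g * h * g⁻¹ ∈ H) (h₂ : ∀ h ∈ H, g⁻¹ * h * g ∈ H) : g ∈ normalizer H :=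
  mem_normalizer_iff.mpr fun h => ⟨h₁ h, fun hh => by simpa [mul_assoc] using h₂ _ hh⟩

end Subgroup

lemma Equiv.Perm.exists_apply_eq_of_snd_eq_iff {X Y : Type*} [Nonempty X] (α : Perm (X × Y))
    (hα : ∀ p q : X × Y, p.2 = q.2 ↔ (α p).2 = (α q).2) :
    ∃ σ : Perm Y, ∃ F : Y → Perm X, ∀ x y, α (x, y) = (F y x, σ y) := by
  obtain ⟨x₀⟩ := ‹Nonempty X›
  have hσ : Function.Bijective fun y => (α (x₀, y)).2 := by
    refine ⟨fun y y' h => (hα _ _).2 h, fun z => ⟨(α⁻¹ (x₀, z)).2, ?_⟩⟩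
    simpa using (hα (x₀, (α⁻¹ (x₀, z)).2) (α⁻¹ (x₀, z))).1 rfl
  have hF : ∀ y, Function.Bijective fun x => (α (x, y)).1 := by
    refine fun y => ⟨fun x x' h => ?_, fun x' => ⟨(α⁻¹ (x', (α (x₀, y)).2)).1, ?_⟩⟩
    · exact congrArg Prod.fst (α.injective (Prod.ext h ((hα (x, y) (x', y)).1 rfl)))
    · set p := α⁻¹ (x', (α (x₀, y)).2)
      have hp : (p.1, y) = p := Prod.ext rfl ((hα p (x₀, y)).2 (by simp [p])).symm
      change (α (p.1, y)).1 = x'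
      rw [hp]
      simp [p]
  exact ⟨Equiv.ofBijective _ hσ, fun y => Equiv.ofBijective _ (hF y),
    fun x y => Prod.ext rfl ((hα (x, y) (x₀, y)).1 rfl)⟩

section Wreath

variable {X Y : Type*} {H : Subgroup (Perm X)}

lemma snd_apply_of_mem_baseGroup {b : Perm (X × Y)} (hb : b ∈ baseGroup X Y H) (p : X × Y) :
    (b p).2 = p.2 := by
  obtain ⟨x, y⟩ := p
  obtain ⟨h, -, hb⟩ := hb y
  rw [hb]

lemma fiberPerm_mem_baseGroup {h : Perm X} (hh : h ∈ H) (y : Y) :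
    fiberPerm X Y h y ∈ baseGroup X Y H := by
  intro y'
  by_cases hy : y' = y
  · subst hy
    exact ⟨h, hh, fiberPerm_apply_eq X Y h y'⟩
  · exact ⟨1, H.one_mem, fun x => fiberPerm_apply_ne X Y h y (x, y') hy⟩

lemma baseGroup_le_wreath (K : Subgroup (Perm Y)) : baseGroup X Y H ≤ wreath X Y H K :=
  fun b hb => ⟨1, K.one_mem, b, hb, by rw [map_one, one_mul]⟩

lemma mem_wreath_iff_apply {K : Subgroup (Perm Y)} {w : Perm (X × Y)} :
    w ∈ wreath X Y H K ↔
      ∃ k ∈ K, ∃ F : Y → Perm X, (∀ y, F y ∈ H) ∧ ∀ x y, w (x, y) = (F y x, k y) := by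
  constructor
  · rintro ⟨k, hk, b, hb, rfl⟩
    choose F hF hb using hb
    exact ⟨k, hk, F, hF, fun x y => by rw [Perm.mul_apply, hb, lamHom_apply]⟩
  · rintro ⟨k, hk, F, hF, hw⟩
    refine ⟨k, hk, (lamHom X Y k)⁻¹ * w, fun y => ⟨F y, hF y, fun x => ?_⟩, by group⟩
    rw [Perm.mul_apply, hw, Perm.inv_eq_iff_eq, lamHom_apply]

lemma exists_fixing_mul_fixing_of_mem_baseGroup [Nontrivial Y] [Nonempty X] {b : Perm (X × Y)}
    (hb : b ∈ baseGroup X Y H) :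
    ∃ b₁ ∈ baseGroup X Y H, ∃ b₂ ∈ baseGroup X Y H,
      (∃ p, b₁ p = p) ∧ (∃ q, b₂ q = q) ∧ b = b₁ * b₂ := by
  obtain ⟨y₀, y₁, hy⟩ := exists_pair_ne Y
  obtain ⟨x₀⟩ := ‹Nonempty X›
  obtain ⟨h, hh, hb₀⟩ := hb y₀
  have hb₁ := fiberPerm_mem_baseGroup hh y₀
  refine ⟨_, hb₁, _, mul_mem (inv_mem hb₁) hb,
    ⟨(x₀, y₁), fiberPerm_apply_ne X Y h y₀ (x₀, y₁) hy.symm⟩, ⟨(x₀, y₀), ?_⟩,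
    (mul_inv_cancel_left _ _).symm⟩
  rw [Perm.mul_apply, hb₀, Perm.inv_eq_iff_eq, fiberPerm_apply_eq]

lemma snd_apply_eq_of_conj_mem_baseGroup (htrans : ∀ x x' : X, ∃ h ∈ H, h x = x')
    {β : Perm (X × Y)} (hβ : ∀ b ∈ baseGroup X Y H, β * b * β⁻¹ ∈ baseGroup X Y H)
    {p q : X × Y} (hpq : p.2 = q.2) : (β p).2 = (β q).2 := by
  obtain ⟨x, y⟩ := p
  obtain ⟨x', y'⟩ := q
  obtain rfl : y = y' := hpq
  obtain ⟨h, hh, rfl⟩ := htrans x x'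
  have := snd_apply_of_mem_baseGroup (hβ _ (fiberPerm_mem_baseGroup hh y)) (β (x, y))
  simpa [Perm.mul_apply, fiberPerm_apply_eq] using this.symm

lemma conj_mem_of_conj_mem_baseGroup {β : Perm (X × Y)}
    (hβ : ∀ b ∈ baseGroup X Y H, β * b * β⁻¹ ∈ baseGroup X Y H)
    {E : Perm X} {y z : Y} (hE : ∀ x, β (x, y) = (E x, z)) {h : Perm X} (hh : h ∈ H) :
    E * h * E⁻¹ ∈ H := by
  obtain ⟨h', hh', hconj⟩ := hβ _ (fiberPerm_mem_baseGroup hh y) z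
  convert hh'
  ext x
  have hinv : β⁻¹ (x, z) = (E⁻¹ x, y) := by
    rw [Perm.inv_eq_iff_eq, hE]
    simp
  have := hconj x
  rw [Perm.mul_apply, Perm.mul_apply, hinv, fiberPerm_apply_eq, hE] at this
  exact congrArg Prod.fst this

end Wreath

section RightRegular

variable {X G : Type*} [Group G] {H : Subgroup (Perm X)}

local notation "W" => wreath X G H (rightRegular G)

lemma mem_wreath_rightRegular_iff {w : Perm (X × G)} :
    w ∈ W ↔ ∃ c : G, ∃ F : G → Perm X, (∀ y, F y ∈ H) ∧ ∀ x y, w (x, y) = (F y x, y * c) := by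
  rw [mem_wreath_iff_apply]
  constructor
  · rintro ⟨_, ⟨c, rfl⟩, F, hF, hw⟩
    exact ⟨c, F, hF, hw⟩
  · rintro ⟨c, F, hF, hw⟩
    exact ⟨_, ⟨c, rfl⟩, F, hF, hw⟩

lemma wreath_rightRegular_transitive (htrans : ∀ x x' : X, ∃ h ∈ H, h x = x')
    (p q : X × G) : ∃ w ∈ W, w p = q := by
  obtain ⟨h, hh, hx⟩ := htrans p.1 q.1
  exact ⟨h.prodCongr (Equiv.mulRight (p.2⁻¹ * q.2)),
    mem_wreath_rightRegular_iff.mpr ⟨_, fun _ => h, fun _ => hh, fun _ _ => rfl⟩,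
    Prod.ext hx (mul_inv_cancel_left _ _)⟩

lemma mem_baseGroup_of_mem_wreath_of_apply_eq {w : Perm (X × G)} (hw : w ∈ W) {p : X × G}
    (hp : w p = p) : w ∈ baseGroup X G H := by
  obtain ⟨c, F, hF, hw⟩ := mem_wreath_rightRegular_iff.mp hw
  obtain ⟨x, y⟩ := p
  have hc : c = 1 := by simpa [hp] using congrArg Prod.snd (hw x y)
  exact fun y => ⟨F y, hF y, fun x => by rw [hw, hc, mul_one]⟩

lemma conj_mem_baseGroup_of_mem_normalizer [Nontrivial G] [Nonempty X] {α : Perm (X × G)}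
    (hα : α ∈ Subgroup.normalizer W) {b : Perm (X × G)} (hb : b ∈ baseGroup X G H) :
    α * b * α⁻¹ ∈ baseGroup X G H := by
  have hfix : ∀ b ∈ baseGroup X G H, ∀ p, b p = p → α * b * α⁻¹ ∈ baseGroup X G H :=
    fun b hb p hp => mem_baseGroup_of_mem_wreath_of_apply_eq
      ((Subgroup.mem_normalizer_iff.mp hα b).mp (baseGroup_le_wreath _ hb)) (p := α p)
      (by simp [Perm.mul_apply, hp])
  obtain ⟨b₁, hb₁, b₂, hb₂, ⟨p, hp⟩, ⟨q, hq⟩, rfl⟩ :=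
    exists_fixing_mul_fixing_of_mem_baseGroup hb
  have hsplit : α * (b₁ * b₂) * α⁻¹ = (α * b₁ * α⁻¹) * (α * b₂ * α⁻¹) := by group
  rw [hsplit]
  exact mul_mem (hfix b₁ hb₁ p hp) (hfix b₂ hb₂ q hq)

lemma exists_apply_eq_of_mem_normalizer_wreath [Nontrivial G] [Nonempty X]
    (htrans : ∀ x x' : X, ∃ h ∈ H, h x = x') {α : Perm (X × G)}
    (hα : α ∈ Subgroup.normalizer W) :
    ∃ σ : Perm G, ∃ F : G → Perm X, ∀ x y, α (x, y) = (F y x, σ y) := by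
  have hblocks : ∀ β : Perm (X × G), β ∈ Subgroup.normalizer W →
      ∀ p q : X × G, p.2 = q.2 → (β p).2 = (β q).2 :=
    fun β hβ _ _ => snd_apply_eq_of_conj_mem_baseGroup htrans
      fun _ hb => conj_mem_baseGroup_of_mem_normalizer hβ hb
  refine α.exists_apply_eq_of_snd_eq_iff fun p q => ⟨hblocks α hα p q, fun h => ?_⟩
  simpa using hblocks α⁻¹ (inv_mem hα) _ _ h

variable [Nonempty X] {α : Perm (X × G)} {σ : Perm G} {F : G → Perm X}

lemma mem_normalizer_of_mem_normalizer_wreath [Nontrivial G] (hα : α ∈ Subgroup.normalizer W)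
    (hαF : ∀ x y, α (x, y) = (F y x, σ y)) (y : G) : F y ∈ Subgroup.normalizer H := by
  have hinv : ∀ x, α⁻¹ (x, σ y) = ((F y)⁻¹ x, y) := fun x => by
    rw [Perm.inv_eq_iff_eq, hαF]
    simp
  refine Subgroup.mem_normalizer_of_conj_mem
    (fun h hh => conj_mem_of_conj_mem_baseGroup
      (fun _ => conj_mem_baseGroup_of_mem_normalizer hα) (hαF · y) hh)
    fun h hh => ?_
  simpa using conj_mem_of_conj_mem_baseGroup
    (fun _ => conj_mem_baseGroup_of_mem_normalizer (inv_mem hα)) hinv hh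

lemma exists_map_mul_right_of_mem_normalizer_wreath (hα : α ∈ Subgroup.normalizer W)
    (hαF : ∀ x y, α (x, y) = (F y x, σ y)) (g : G) :
    ∃ g' : G, ∀ y, σ (y * g) = σ y * g' ∧ F (y * g) * (F y)⁻¹ ∈ H := by
  have hg : lamHom X G (Equiv.mulRight g) ∈ W := ⟨_, ⟨g, rfl⟩, 1, one_mem _, (mul_one _).symm⟩
  obtain ⟨g', F', hF', hconj⟩ :=
    mem_wreath_rightRegular_iff.mp ((Subgroup.mem_normalizer_iff.mp hα _).mp hg)
  refine ⟨g', fun y => ?_⟩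
  have key : ∀ x, (F (y * g) x, σ (y * g)) = (F' (σ y) (F y x), σ y * g') := fun x => by
    rw [← hconj, ← hαF, ← hαF]
    simp [Perm.mul_apply, lamHom_apply]
  have hFy : F (y * g) = F' (σ y) * F y := Equiv.ext fun x => congrArg Prod.fst (key x)
  refine ⟨congrArg Prod.snd (key (Classical.arbitrary X)), ?_⟩
  rw [hFy, mul_inv_cancel_right]
  exact hF' _

end RightRegular

lemma exists_mulAut_of_map_mul_right {G : Type*} [Group G] {σ : Perm G}
    (hσ : ∀ g, ∃ g', ∀ y, σ (y * g) = σ y * g') :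
    ∃ γ : MulAut G, ∃ a : G, ∀ y, σ y = γ y * a := by
  have hmul : ∀ y g, σ (y * g) * (σ 1)⁻¹ = σ y * (σ 1)⁻¹ * (σ g * (σ 1)⁻¹) := fun y g => by
    obtain ⟨g', hg'⟩ := hσ g
    have hg : σ g = σ 1 * g' := by simpa using hg' 1
    rw [hg' y, hg]
    group
  let τ : Perm G := σ.trans (Equiv.mulRight (σ 1)⁻¹)
  exact ⟨MulEquiv.mk' τ hmul, σ 1, fun y => (inv_mul_cancel_right _ _).symm⟩

def prodCongrHom (X G : Type*) [Group G] : Perm X × MulAut G →* Perm (X × G) where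
  toFun p := p.1.prodCongr p.2.toEquiv
  map_one' := rfl
  map_mul' _ _ := rfl

def prodCongrSubgroup {X : Type*} (M : Subgroup (Perm X)) (G : Type*) [Group G] :
    Subgroup (Perm (X × G)) :=
  (M.prod ⊤).map (prodCongrHom X G)

section Complement

variable {X G : Type*} [Group G]

@[simp]
lemma prodCongrHom_apply (p : Perm X × MulAut G) (x : X) (y : G) :
    prodCongrHom X G p (x, y) = (p.1 x, p.2 y) := rfl

lemma prodCongrHom_injective [Nonempty X] : Function.Injective (prodCongrHom X G) := by
  rw [injective_iff_map_eq_one]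
  rintro ⟨m, γ⟩ h
  obtain ⟨x₀⟩ := ‹Nonempty X›
  have h' : ∀ x y, (m x, γ y) = (x, y) := fun x y => DFunLike.congr_fun h (x, y)
  exact Prod.ext (Equiv.ext fun x => congrArg Prod.fst (h' x 1))
    (MulEquiv.ext fun y => congrArg Prod.snd (h' x₀ y))

noncomputable def prodCongrSubgroupEquiv [Nonempty X] (M : Subgroup (Perm X)) :
    prodCongrSubgroup M G ≃* M × MulAut G :=
  ((M.prod ⊤).equivMapOfInjective _ prodCongrHom_injective).symm.trans
    ((M.prodEquiv ⊤).trans (MulEquiv.prodCongr (MulEquiv.refl M) Subgroup.topEquiv))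

variable {H : Subgroup (Perm X)}

local notation "W" => wreath X G H (rightRegular G)

lemma prodCongrHom_conj_mem_wreath {m : Perm X} (hm : m ∈ Subgroup.normalizer H) (γ : MulAut G)
    {w : Perm (X × G)} (hw : w ∈ W) :
    prodCongrHom X G (m, γ) * w * (prodCongrHom X G (m, γ))⁻¹ ∈ W := by
  obtain ⟨c, F, hF, hw⟩ := mem_wreath_rightRegular_iff.mp hw
  refine mem_wreath_rightRegular_iff.mpr ⟨γ c, fun y => m * F (γ⁻¹ y) * m⁻¹,
    fun y => (Subgroup.mem_normalizer_iff.mp hm _).mp (hF _), fun x y => ?_⟩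
  rw [← map_inv]
  simp [Perm.mul_apply, hw]

lemma prodCongrSubgroup_le_normalizer {M : Subgroup (Perm X)}
    (hM : M ≤ Subgroup.normalizer H) : prodCongrSubgroup M G ≤ Subgroup.normalizer W := by
  rw [Subgroup.le_normalizer_iff]
  rintro _ ⟨⟨m, γ⟩, ⟨hm, -⟩, rfl⟩ w hw
  exact prodCongrHom_conj_mem_wreath (hM hm) γ hw

lemma prodCongrSubgroup_inf_wreath [Nonempty X] {M : Subgroup (Perm X)} (hM : M ⊓ H = ⊥) :
    prodCongrSubgroup M G ⊓ W = ⊥ := by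
  rw [eq_bot_iff]
  rintro _ ⟨⟨⟨m, γ⟩, ⟨hm, -⟩, rfl⟩, hw⟩
  obtain ⟨c, F, hF, hw⟩ := mem_wreath_rightRegular_iff.mp hw
  obtain ⟨x₀⟩ := ‹Nonempty X›
  have hγ : ∀ y, γ y = y * c := fun y => congrArg Prod.snd (hw x₀ y)
  have hc : c = 1 := by simpa using (hγ 1).symm
  have hmF : m = F 1 := Equiv.ext fun x => congrArg Prod.fst (hw x 1)
  have hm1 : m = 1 := by
    have hmMH : m ∈ M ⊓ H := ⟨hm, hmF ▸ hF 1⟩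
    rwa [hM, Subgroup.mem_bot] at hmMH
  have hγ1 : γ = 1 := MulEquiv.ext fun y => by simp [hγ, hc]
  subst hm1 hγ1
  exact map_one _

lemma exists_prodCongrHom_inv_mul_mem_wreath [Nontrivial G] [Nonempty X]
    (htrans : ∀ x x' : X, ∃ h ∈ H, h x = x') {M : Subgroup (Perm X)}
    (hMN : M ≤ Subgroup.normalizer H)
    (hN : ∀ β ∈ Subgroup.normalizer H, ∃ m ∈ M, ∃ h ∈ H, β = m * h)
    {α : Perm (X × G)} (hα : α ∈ Subgroup.normalizer W) :
    ∃ m ∈ M, ∃ γ : MulAut G, (prodCongrHom X G (m, γ))⁻¹ * α ∈ W := by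
  obtain ⟨σ, F, hαF⟩ := exists_apply_eq_of_mem_normalizer_wreath htrans hα
  choose g' hg' using exists_map_mul_right_of_mem_normalizer_wreath hα hαF
  obtain ⟨γ, a, hσ⟩ := exists_mulAut_of_map_mul_right fun g => ⟨g' g, fun y => (hg' g y).1⟩
  obtain ⟨m, hm, h, hh, hF₁⟩ := hN _ (mem_normalizer_of_mem_normalizer_wreath hα hαF 1)
  -- `F y ∈ H * F 1 = H * m * h`, and `m` normalizes `H`.
  have hmF : ∀ y, m⁻¹ * F y ∈ H := fun y => by
    have hFy : F y * (F 1)⁻¹ ∈ H := by simpa using (hg' y 1).2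
    have hsplit : m⁻¹ * F y = m⁻¹ * (F y * (F 1)⁻¹) * m * h := by rw [hF₁]; group
    rw [hsplit]
    exact mul_mem ((Subgroup.mem_normalizer_iff''.mp (hMN hm) _).mp hFy) hh
  refine ⟨m, hm, γ, mem_wreath_rightRegular_iff.mpr
    ⟨γ⁻¹ a, fun y => m⁻¹ * F y, hmF, fun x y => ?_⟩⟩
  rw [Perm.mul_apply, Perm.inv_eq_iff_eq, hαF, hσ]
  simp

end Complement

def IsComplementInNormalizer {Z : Type*} (M W : Subgroup (Perm Z)) : Prop :=
  (∀ α, α ∈ Subgroup.normalizer W ↔ ∃ m ∈ M, ∃ w ∈ W, α = m * w) ∧ M ⊓ W = ⊥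

lemma isComplementInNormalizer_bot {Z : Type*} [Subsingleton Z] (W : Subgroup (Perm Z)) :
    IsComplementInNormalizer ⊥ W :=
  ⟨fun α => ⟨fun _ => ⟨1, one_mem _, 1, one_mem _, Subsingleton.elim _ _⟩,
    fun _ => Subsingleton.elim α 1 ▸ one_mem _⟩, bot_inf_eq W⟩

lemma IsComplementInNormalizer.prodCongrSubgroup {X G : Type*} [Group G] [Nontrivial G]
    [Nonempty X] {M H : Subgroup (Perm X)} (htrans : ∀ x x' : X, ∃ h ∈ H, h x = x')
    (hM : IsComplementInNormalizer M H) :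
    IsComplementInNormalizer (prodCongrSubgroup M G) (wreath X G H (rightRegular G)) := by
  have hMN : M ≤ Subgroup.normalizer H := fun m hm =>
    (hM.1 m).mpr ⟨m, hm, 1, one_mem _, (mul_one m).symm⟩
  refine ⟨fun α => ⟨fun hα => ?_, ?_⟩, prodCongrSubgroup_inf_wreath hM.2⟩
  · obtain ⟨m, hm, γ, hw⟩ :=
      exists_prodCongrHom_inv_mul_mem_wreath htrans hMN (fun β => (hM.1 β).mp) hα
    exact ⟨_, ⟨(m, γ), ⟨hm, Subgroup.mem_top γ⟩, rfl⟩, _, hw, (mul_inv_cancel_left _ _).symm⟩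
  · rintro ⟨s, hs, w, hw, rfl⟩
    exact mul_mem (prodCongrSubgroup_le_normalizer hMN hs) (Subgroup.le_normalizer hw)

def Fin.consMulEquiv (A : Type*) [Group A] (n : ℕ) : A × (Fin n → A) ≃* (Fin (n + 1) → A) :=
  { Fin.consEquiv fun _ => A with
    map_mul' := fun _ _ => by ext i; cases i using Fin.cases <;> rfl }

instance iterSpace.instNonempty (G : Type*) [Group G] : ∀ n, Nonempty (iterSpace G n)
  | 0 => inferInstanceAs (Nonempty PUnit)
  | n + 1 => have := iterSpace.instNonempty G n; inferInstanceAs (Nonempty (_ × G))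

instance iterSpace.instSubsingleton (G : Type*) [Subsingleton G] :
    ∀ n, Subsingleton (iterSpace G n)
  | 0 => inferInstanceAs (Subsingleton PUnit)
  | n + 1 => have := iterSpace.instSubsingleton G n; inferInstanceAs (Subsingleton (_ × G))

lemma iterW_transitive (G : Type*) [Group G] :
    ∀ (n : ℕ) (p q : iterSpace G n), ∃ w ∈ iterW G n, w p = q
  | 0, _, _ => ⟨1, one_mem _, Subsingleton.elim (α := PUnit) _ _⟩
  | n + 1, p, q => wreath_rightRegular_transitive (iterW_transitive G n) p q

lemma exists_isComplementInNormalizer_iterW (G : Type*) [Group G] [Nontrivial G] (n : ℕ) :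
    ∃ M, IsComplementInNormalizer M (iterW G n) ∧ Nonempty (M ≃* (Fin n → MulAut G)) := by
  induction n with
  | zero =>
    have : Subsingleton (iterSpace G 0) := inferInstanceAs (Subsingleton PUnit)
    exact ⟨⊥, isComplementInNormalizer_bot _, ⟨MulEquiv.ofUnique⟩⟩
  | succ n ih =>
    obtain ⟨M, hM, ⟨e⟩⟩ := ih
    exact ⟨prodCongrSubgroup M G, hM.prodCongrSubgroup (iterW_transitive G n),
      ⟨(prodCongrSubgroupEquiv M).trans ((e.prodCongr (MulEquiv.refl _)).trans
        (MulEquiv.prodComm.trans (Fin.consMulEquiv _ n)))⟩⟩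

/-- **Theorem.** For every group `G` and every `n ∈ ℕ`, the normalizer of the iterated
wreath product `W(G,n)` in the symmetric group `Perm(Gⁿ)` is an internal semidirect
product `Mₙ ⋉ W(G,n)`, where `Mₙ ≅ Aut(G)ⁿ`. -/
theorem normalizer_iterW_eq_semidirect (G : Type*) [Group G] (n : ℕ) :
    ∃ M : Subgroup (Perm (iterSpace G n)),
      (∀ α : Perm (iterSpace G n),
        α ∈ Subgroup.normalizer (iterW G n : Set (Perm (iterSpace G n))) ↔ ∃ m ∈ M, ∃ w ∈ iterW G n, α = m * w) ∧
      M ⊓ iterW G n = ⊥ ∧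
      (∀ α ∈ Subgroup.normalizer (iterW G n : Set (Perm (iterSpace G n))), ∀ w ∈ iterW G n, α⁻¹ * w * α ∈ iterW G n) ∧
      Nonempty (M ≃* (Fin n → MulAut G)) := by
  obtain ⟨M, ⟨hN, hinf⟩, he⟩ :
      ∃ M, IsComplementInNormalizer M (iterW G n) ∧ Nonempty (M ≃* (Fin n → MulAut G)) := by
    rcases subsingleton_or_nontrivial G with _ | _
    · have : Unique (MulAut G) := ⟨⟨1⟩, fun _ => MulEquiv.ext fun _ => Subsingleton.elim _ _⟩
      exact ⟨⊥, isComplementInNormalizer_bot _, ⟨MulEquiv.ofUnique⟩⟩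
    · exact exists_isComplementInNormalizer_iterW G n
  exact ⟨M, hN, hinf, fun α hα w hw => (Subgroup.mem_normalizer_iff''.mp hα w).mp hw, he⟩
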